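/- arXiv:1005.0582 — 3 statements merged into one kernel-verified Lean document; each statement's English description precedes it below -/
import Mathlib

section
/- For all real ε with 0 < ε ≤ 1 and integers j, k with k ≥ 1 and j ≥ 4k/ε, we have binomial(εj/2, k) / binomial(j+1, k) ≥ (ε/4)^k, where binomial(x, k) denotes the generalized binomial coefficient x(x-1)···(x-k+1)/k!. -/
/-- Generalized binomial coefficient: binom(x, k) = x(x-1)⋯(x-k+1)/k! for real x. -/
noncomputable def gbinom (x : ℝ) (k : ℕ) : ℝ :=
  (∏ i ∈ Finset.range k, (x - i)) / (k.factorial : ℝ)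

/-- for 0 < ε ≤ 1, k ≥ 1 and j ≥ 4k/ε,
binom(εj/2, k) / binom(j+1, k) ≥ (ε/4)^k. -/
theorem gbinom_ratio_ge (ε : ℝ) (hε : 0 < ε) (hε1 : ε ≤ 1) (j k : ℕ) (hk : 1 ≤ k)
    (hj : (4 * k : ℝ) / ε ≤ j) :
    (ε / 4) ^ k ≤ gbinom (ε * j / 2) k / gbinom ((j : ℝ) + 1) k := by
  have hjk : (k : ℝ) ≤ ε * j / 4 := by
    rw [div_le_iff₀ hε] at hj
    nlinarith
  have hden : ∀ i ∈ Finset.range k, (0:ℝ) < (j:ℝ) + 1 - i := by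
    intro i hi
    have hi' : (i : ℝ) < k := by exact_mod_cast Finset.mem_range.mp hi
    nlinarith
  have key : ∀ i ∈ Finset.range k, ε / 4 * ((j:ℝ) + 1 - i) ≤ ε * j / 2 - i := by
    intro i hi
    have hi' : (i : ℝ) ≤ (k : ℝ) - 1 := by
      have := Finset.mem_range.mp hi
      have : (i : ℝ) + 1 ≤ k := by exact_mod_cast this
      linarith
    have hk1 : (1 : ℝ) ≤ k := by exact_mod_cast hk
    nlinarith
  have hDpos : 0 < ∏ i ∈ Finset.range k, ((j:ℝ) + 1 - i) := Finset.prod_pos hden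
  have hprod : (ε / 4) ^ k * ∏ i ∈ Finset.range k, ((j:ℝ) + 1 - i)
      ≤ ∏ i ∈ Finset.range k, (ε * j / 2 - i) := by
    calc (ε / 4) ^ k * ∏ i ∈ Finset.range k, ((j:ℝ) + 1 - i)
        = ∏ i ∈ Finset.range k, (ε / 4 * ((j:ℝ) + 1 - i)) := by
          rw [Finset.prod_mul_distrib, Finset.prod_const, Finset.card_range]
      _ ≤ ∏ i ∈ Finset.range k, (ε * j / 2 - i) := by
          refine Finset.prod_le_prod (fun i hi => ?_) key
          have := hden i hi
          positivity
  have hfac : (0:ℝ) < (k.factorial : ℝ) := by positivity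
  have hratio : gbinom (ε * j / 2) k / gbinom ((j : ℝ) + 1) k
      = (∏ i ∈ Finset.range k, (ε * j / 2 - i)) / ∏ i ∈ Finset.range k, ((j:ℝ) + 1 - i) := by
    unfold gbinom
    rw [div_div_div_comm, div_self hfac.ne', div_one]
  rw [hratio, le_div_iff₀ hDpos]
  exact hprod
end

section
/- Suppose 𝓗 is a k-uniform hypergraph on vertex set [l], G is a subgraph of Q_n, S ⊆ [n] with |S| = j+1-k, and 𝓘 is the k-uniform hypergraph on [n] \ S whose edges are the k-sets I ⊆ [n] \ S such that for every i ∈ I, replacing coordinate i of the characteristic vector of S ∪ I by a flip-bit yields an edge of G. If g : [l] → [n] \ S is an injective embedding of 𝓗 into 𝓘, and H ⊆ Q_l is a subgraph with representation 𝓗 (every edge of H has exactly k non-zero bits whose position set maps under τ into E(𝓗)), then the map f : Q_l → Q_n sending [a_1...a_l] with non-zero positions i_1,...,i_r to the characteristic vector of S ∪ {g(i_1),...,g(i_r)} is a graph embedding of H into G. -/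
/-- The hypercube graph `Q n`. -/
def Q (n : ℕ) : SimpleGraph (Fin n → Bool) where
  Adj u v := hammingDist u v = 1
  symm := ⟨fun u v h => by simpa [hammingDist_comm] using h⟩
  loopless := ⟨fun u h => by simp [hammingDist_self] at h⟩

/-- The support (set of 1-coordinates) of a vertex of the hypercube. -/
def supp {n : ℕ} (v : Fin n → Bool) : Finset (Fin n) :=
  Finset.univ.filter fun i => v i = true

/-- The characteristic vector of a set of coordinates. -/
def χ {n : ℕ} (T : Finset (Fin n)) : Fin n → Bool := fun i => decide (i ∈ T)

/-!
An edge `uv` of `H ≤ Q l` flips a single coordinate `i`, so its two supports are `T` and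
`T \ {i}` with `T = supp u ∪ supp v ∈ 𝓗`. Their images are `S ∪ g(T)` and the same set with
`g i` removed (as `g` is injective and avoids `S`), which is an edge of `G` precisely because
`g` embeds `𝓗` into `𝓘`. Injectivity of the map holds since `S ∪ g(·)` can be undone by
removing `S` and pulling back along `g`.
-/

theorem mem_supp {n : ℕ} {v : Fin n → Bool} {i : Fin n} : i ∈ supp v ↔ v i = true := by
  simp [supp]

theorem χ_injective {n : ℕ} : Function.Injective (χ (n := n)) := fun T T' h => by
  ext i
  simpa [χ] using congrFun h i

theorem χ_supp {n : ℕ} (v : Fin n → Bool) : χ (supp v) = v := by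
  funext i
  simp [χ, supp]

theorem supp_injective {n : ℕ} : Function.Injective (supp (n := n)) :=
  Function.LeftInverse.injective χ_supp

theorem supp_eq_erase_of_forall_ne {n : ℕ} {u v : Fin n → Bool} {i : Fin n}
    (hagree : ∀ x ≠ i, u x = v x) (hu : u i = false) :
    supp u = (supp v).erase i := by
  ext x
  rcases eq_or_ne x i with rfl | hx
  · simp [mem_supp, hu]
  · simp [mem_supp, hx, hagree x hx]

theorem Q_adj_exists_supp_eq_erase {n : ℕ} {u v : Fin n → Bool} (h : (Q n).Adj u v) :
    ∃ i, (i ∈ supp v ∧ supp u = (supp v).erase i) ∨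
      (i ∈ supp u ∧ supp v = (supp u).erase i) := by
  obtain ⟨i, hi⟩ := Finset.card_eq_one.mp (show hammingDist u v = 1 from h)
  have hdiff : ∀ x, u x ≠ v x ↔ x = i := fun x => by
    simpa using Finset.ext_iff.mp hi x
  have hagree : ∀ x ≠ i, u x = v x := fun x hx => not_not.mp (mt (hdiff x).mp hx)
  refine ⟨i, ?_⟩
  cases hv : v i <;> cases hu : u i
  · exact absurd (hu.trans hv.symm) ((hdiff i).mpr rfl)
  · exact .inr ⟨mem_supp.mpr hu,
      supp_eq_erase_of_forall_ne (fun x hx => (hagree x hx).symm) hv⟩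
  · exact .inl ⟨mem_supp.mpr hv, supp_eq_erase_of_forall_ne hagree hu⟩
  · exact absurd (hu.trans hv.symm) ((hdiff i).mpr rfl)

section Lift

variable {l n : ℕ} {S : Finset (Fin n)} {g : Fin l → Fin n}

theorem union_image_erase (hg : Function.Injective g) (T : Finset (Fin l)) {i : Fin l}
    (hi : g i ∉ S) : S ∪ (T.erase i).image g = (S ∪ T.image g).erase (g i) := by
  rw [Finset.image_erase hg, Finset.erase_union_distrib, Finset.erase_eq_of_notMem hi]

theorem union_image_supp_injective (hg : Function.Injective g) (hgS : ∀ x, g x ∉ S) :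
    Function.Injective fun a : Fin l → Bool => S ∪ (supp a).image g := by
  intro a b h
  have hdisj : ∀ T : Finset (Fin l), Disjoint S (T.image g) := fun T =>
    Finset.disjoint_right.mpr fun y hy => by
      obtain ⟨x, -, rfl⟩ := Finset.mem_image.mp hy
      exact hgS x
  have himage := congrArg (· \ S) h
  simp only [Finset.union_sdiff_cancel_left (hdisj _)] at himage
  exact supp_injective (Finset.image_injective hg himage)

theorem adj_union_image_erase {𝓗 : Finset (Finset (Fin l))} {G : SimpleGraph (Fin n → Bool)}
    (hg : Function.Injective g) (hgS : ∀ x, g x ∉ S)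
    (hgemb : ∀ e ∈ 𝓗, ∀ i ∈ e.image g,
      G.Adj (χ ((S ∪ e.image g).erase i)) (χ (S ∪ e.image g)))
    {T : Finset (Fin l)} (hT : T ∈ 𝓗) {i : Fin l} (hi : i ∈ T) :
    G.Adj (χ (S ∪ (T.erase i).image g)) (χ (S ∪ T.image g)) := by
  rw [union_image_erase hg T (hgS i)]
  exact hgemb T hT (g i) (Finset.mem_image_of_mem g hi)

end Lift

theorem embedding_lemma_general
    (k l n : ℕ)
    (𝓗 : Finset (Finset (Fin l)))
    (G : SimpleGraph (Fin n → Bool))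
    (S : Finset (Fin n))
    (g : Fin l → Fin n) (hginj : Function.Injective g) (hgS : ∀ x, g x ∉ S)
    (hgemb : ∀ e ∈ 𝓗, ∀ i ∈ e.image g,
      G.Adj (χ ((S ∪ e.image g).erase i)) (χ (S ∪ e.image g)))
    (H : SimpleGraph (Fin l → Bool)) (hH : H ≤ Q l)
    (hrep : ∀ u v, H.Adj u v → (supp u ∪ supp v).card = k ∧ supp u ∪ supp v ∈ 𝓗) :
    Function.Injective (fun a : Fin l → Bool => χ (S ∪ (supp a).image g)) ∧
    ∀ u v, H.Adj u v →
      G.Adj (χ (S ∪ (supp u).image g)) (χ (S ∪ (supp v).image g)) := by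
  refine ⟨χ_injective.comp (union_image_supp_injective hginj hgS), fun u v huv => ?_⟩
  have hmem := (hrep u v huv).2
  obtain ⟨i, ⟨hi, hu⟩ | ⟨hi, hv⟩⟩ := Q_adj_exists_supp_eq_erase (hH huv)
  · rw [hu, Finset.union_eq_right.mpr (Finset.erase_subset i _)] at hmem
    rw [hu]
    exact adj_union_image_erase hginj hgS hgemb hmem hi
  · rw [hv, Finset.union_eq_left.mpr (Finset.erase_subset i _)] at hmem
    rw [hv]
    exact (adj_union_image_erase hginj hgS hgemb hmem hi).symm

/-- embedding lemma: suppose `𝓗` is a k-uniform hypergraph on `[l]`,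
`G ≤ Q n`, `S ⊆ [n]` has size `j+1-k`, and `g : [l] → [n] \ S` is injective with the
property that for each edge `e` of `𝓗` and each `i ∈ g(e)`, replacing coordinate `i` of
the characteristic vector of `S ∪ g(e)` by a flip-bit yields an edge of `G` (i.e. `𝓗`
embeds via `g` into the auxiliary hypergraph `𝓘`).  If `H ≤ Q l` has representation `𝓗`
(each edge of `H` has exactly `k` non-zero bits, forming an edge of `𝓗`), then the map
`f` sending `a` to the characteristic vector of `S ∪ g(supp a)` is an embedding of `H`
into `G`. -/
theorem embedding_lemma
    (k l n j : ℕ)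
    (𝓗 : Finset (Finset (Fin l))) (h𝓗unif : ∀ e ∈ 𝓗, e.card = k)
    (G : SimpleGraph (Fin n → Bool)) (hG : G ≤ Q n)
    (S : Finset (Fin n)) (hScard : S.card = j + 1 - k)
    (g : Fin l → Fin n) (hginj : Function.Injective g) (hgS : ∀ x, g x ∉ S)
    (hgemb : ∀ e ∈ 𝓗, ∀ i ∈ e.image g,
      G.Adj (χ ((S ∪ e.image g).erase i)) (χ (S ∪ e.image g)))
    (H : SimpleGraph (Fin l → Bool)) (hH : H ≤ Q l)
    (hrep : ∀ u v, H.Adj u v → (supp u ∪ supp v).card = k ∧ supp u ∪ supp v ∈ 𝓗) :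
    Function.Injective (fun a : Fin l → Bool => χ (S ∪ (supp a).image g)) ∧
    ∀ u v, H.Adj u v →
      G.Adj (χ (S ∪ (supp u).image g)) (χ (S ∪ (supp v).image g)) :=
  embedding_lemma_general k l n 𝓗 G S g hginj hgS hgemb H hH hrep
end

section
/- Combining the representation theorem with the Erdős box theorem: if H is a subgraph of the cube admitting a k-partite representation whose partite sets have sizes s_1, ..., s_k, then ex(Q_n, H) = O(2^n * n^(1 - δ/k)) where δ = 1/(s_1 * s_2 * ... * s_{k-1}) (assuming s_1 ≤ s_2 ≤ ... ≤ s_k). -/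
open Finset Function

section Cube

variable {n : ℕ}

def switchOn (z : Fin n → Bool) (S : Finset (Fin n)) : Fin n → Bool :=
  fun i => if i ∈ S then true else z i

def switchOff (y : Fin n → Bool) (S : Finset (Fin n)) : Fin n → Bool :=
  fun i => if i ∈ S then false else y i

lemma switchOn_switchOff {y : Fin n → Bool} {S : Finset (Fin n)} (hy : ∀ i ∈ S, y i = true) :
    switchOn (switchOff y S) S = y := by
  funext i
  by_cases hi : i ∈ S <;> simp [switchOn, switchOff, hi, hy]

lemma update_switchOn {z : Fin n → Bool} {S : Finset (Fin n)} {x : Fin n} (hx : z x = false) :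
    update (switchOn z S) x false = switchOn z (S.erase x) := by
  funext i
  by_cases hi : i = x
  · subst hi; simp [switchOn, hx]
  · simp [switchOn, hi]

lemma supp_update_false (v : Fin n → Bool) (i : Fin n) :
    supp (update v i false) = (supp v).erase i := by
  ext j
  by_cases hj : j = i <;> simp [supp, hj]

lemma Q.exists_eq_update_of_adj {u v : Fin n → Bool} (h : (Q n).Adj u v) :
    ∃ i, (v i = true ∧ u = update v i false) ∨ (u i = true ∧ v = update u i false) := by
  obtain ⟨i, hi⟩ := Finset.card_eq_one.1 (show hammingDist u v = 1 from h)
  have hdiff : ∀ j, u j ≠ v j ↔ j = i := fun j => by simpa using Finset.ext_iff.1 hi j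
  have hsame : ∀ j ≠ i, u j = v j := fun j hj => not_not.1 fun h => hj ((hdiff j).1 h)
  refine ⟨i, ?_⟩
  have hi' := (hdiff i).2 rfl
  cases hv : v i
  · refine Or.inr ⟨by simpa [hv] using hi', funext fun j => ?_⟩
    by_cases hj : j = i
    · subst hj; simpa using hv
    · simp [hj, hsame j hj]
  · refine Or.inl ⟨rfl, funext fun j => ?_⟩
    by_cases hj : j = i
    · subst hj; simpa [hv] using hi'
    · simp [hj, hsame j hj]

lemma image_eq_univ_of_injOn {α : Type*} {k : ℕ} {σ : α → Fin k} {S : Finset α}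
    (hσ : Set.InjOn σ S) (hS : #S = k) : S.image σ = univ :=
  eq_univ_of_card _ (by rw [card_image_of_injOn hσ, hS, Fintype.card_fin])

lemma nonempty_supp_union_of_ne {u v : Fin n → Bool} (h : u ≠ v) :
    (supp u ∪ supp v).Nonempty := by
  obtain ⟨i, hi⟩ := Function.ne_iff.1 h
  exact ⟨i, by cases hu : u i <;> cases hv : v i <;> simp_all [supp]⟩

end Cube

section LinkTuples

variable {n : ℕ} (G : SimpleGraph (Fin n → Bool))

open Classical in
noncomputable def downSet (y : Fin n → Bool) : Finset (Fin n) :=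
  {i | y i = true ∧ G.Adj (update y i false) y}

open Classical in
noncomputable def linkTuples (k : ℕ) (z : Fin n → Bool) : Finset (Fin k → Fin n) :=
  {b | (∀ t, z (b t) = false) ∧ ∀ t, b t ∈ downSet G (switchOn z (univ.image b))}

variable {G}

lemma mem_downSet {y : Fin n → Bool} {i : Fin n} :
    i ∈ downSet G y ↔ y i = true ∧ G.Adj (update y i false) y := by
  simp [downSet]

lemma mem_linkTuples {k : ℕ} {z : Fin n → Bool} {b : Fin k → Fin n} :
    b ∈ linkTuples G k z ↔
      (∀ t, z (b t) = false) ∧ ∀ t, b t ∈ downSet G (switchOn z (univ.image b)) := by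
  simp [linkTuples]

lemma ncard_edgeSet_le_sum_card_downSet (hG : G ≤ Q n) :
    G.edgeSet.ncard ≤ ∑ y, #(downSet G y) := by
  rw [← card_sigma]
  calc G.edgeSet.ncard
      ≤ (((univ.sigma (downSet G)).image fun p => s(update p.1 p.2 false, p.1) :
          Finset _) : Set (Sym2 (Fin n → Bool))).ncard := by
        refine Set.ncard_le_ncard (fun e he => ?_) (Finset.finite_toSet _)
        induction e using Sym2.ind with
        | _ u v =>
          obtain ⟨i, ⟨hv, rfl⟩ | ⟨hu, rfl⟩⟩ := Q.exists_eq_update_of_adj (u := u) (v := v) (hG he)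
          · exact mem_image.2 ⟨⟨v, i⟩, by simpa [mem_downSet, hv] using he, rfl⟩
          · exact mem_image.2 ⟨⟨u, i⟩, by simpa [mem_downSet, hu] using he.symm, Sym2.eq_swap⟩
    _ ≤ _ := by rw [Set.ncard_coe_finset]; exact card_image_le

lemma sum_card_downSet_pow_le_sum_card_linkTuples (k : ℕ) :
    ∑ y, #(downSet G y) ^ k ≤ ∑ z, #(linkTuples G k z) := by
  simp_rw [← Fintype.card_piFinset_const, ← card_sigma]
  have hup : ∀ y (b : Fin k → Fin n), b ∈ Fintype.piFinset (fun _ => downSet G y) →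
      switchOn (switchOff y (univ.image b)) (univ.image b) = y := fun y b hb =>
    switchOn_switchOff fun i hi => by
      obtain ⟨t, -, rfl⟩ := mem_image.1 hi
      exact (mem_downSet.1 (Fintype.mem_piFinset.1 hb t)).1
  refine card_le_card_of_injOn (fun p => ⟨switchOff p.1 (univ.image p.2), p.2⟩) ?_ ?_
  · rintro ⟨y, b⟩ hb
    rw [mem_coe, mem_sigma] at hb
    simp only [mem_coe, mem_sigma, mem_univ, true_and, mem_linkTuples, hup y b hb.2]
    exact ⟨fun t => by simp [switchOff], Fintype.mem_piFinset.1 hb.2⟩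
  · rintro ⟨y, b⟩ hb ⟨y', b'⟩ hb' h
    rw [mem_coe, mem_sigma] at hb hb'
    simp only [Sigma.mk.inj_iff, heq_eq_eq] at h
    obtain ⟨h, rfl⟩ := h
    rw [← hup y b hb.2, h, hup y' b hb'.2]

lemma exists_ncard_edgeSet_pow_le (hG : G ≤ Q n) {k : ℕ} (hk : 1 ≤ k) :
    ∃ z, G.edgeSet.ncard ^ k ≤ (2 ^ n) ^ k * #(linkTuples G k z) := by
  obtain ⟨z, -, hz⟩ := exists_max_image univ (fun z => #(linkTuples G k z)) univ_nonempty
  obtain ⟨k, rfl⟩ := Nat.exists_eq_add_of_le' hk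
  refine ⟨z, ?_⟩
  calc G.edgeSet.ncard ^ (k + 1)
      ≤ (∑ y, #(downSet G y)) ^ (k + 1) := by gcongr; exact ncard_edgeSet_le_sum_card_downSet hG
    _ ≤ (2 ^ n) ^ k * ∑ y, #(downSet G y) ^ (k + 1) := by
        simpa using pow_sum_le_card_mul_sum_pow (s := (univ : Finset (Fin n → Bool)))
          (fun y _ => Nat.zero_le (#(downSet G y))) k
    _ ≤ (2 ^ n) ^ k * ∑ z, #(linkTuples G (k + 1) z) :=
        Nat.mul_le_mul_left _ (sum_card_downSet_pow_le_sum_card_linkTuples _)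
    _ ≤ (2 ^ n) ^ k * (2 ^ n * #(linkTuples G (k + 1) z)) := by
        refine Nat.mul_le_mul_left _ ?_
        simpa using sum_le_card_nsmul univ _ _ fun z' _ => hz z' (mem_univ _)
    _ = (2 ^ n) ^ (k + 1) * #(linkTuples G (k + 1) z) := by ring

end LinkTuples

lemma sub_pow_le_choose_mul (ℓ s : ℕ) : (ℓ - s) ^ s ≤ ℓ.choose s * s ^ s :=
  calc (ℓ - s) ^ s ≤ (ℓ + 1 - s) ^ s := Nat.pow_le_pow_left (by omega) s
    _ ≤ ℓ.descFactorial s := Nat.pow_sub_le_descFactorial ℓ s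
    _ = s.factorial * ℓ.choose s := Nat.descFactorial_eq_factorial_mul_choose ℓ s
    _ ≤ ℓ.choose s * s ^ s := by rw [mul_comm]; exact Nat.mul_le_mul_left _ (Nat.factorial_le_pow s)

lemma exists_card_eq_pow_sum_sub_le {ι α : Type*} [Fintype ι] [Fintype α] [DecidableEq α]
    (L : ι → Finset α) {s : ℕ} (hs : 1 ≤ s) (hsα : s ≤ Fintype.card α) :
    ∃ T : Finset α, #T = s ∧ (∑ i, (#(L i) - s)) ^ s ≤
      Fintype.card ι ^ (s - 1) * s ^ s * Fintype.card α ^ s * #{i | T ⊆ L i} := by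
  have hne : (powersetCard s (univ : Finset α)).Nonempty := powersetCard_nonempty.2 (by simpa using hsα)
  obtain ⟨T, hT, hmax⟩ := exists_max_image _ (fun T => #{i | T ⊆ L i}) hne
  refine ⟨T, (mem_powersetCard.1 hT).2, ?_⟩
  have hcount : ∑ i, #(powersetCard s (L i)) = ∑ T ∈ powersetCard s univ, #{i | T ⊆ L i} := by
    convert sum_card_bipartiteAbove_eq_sum_card_bipartiteBelow (s := univ)
      (t := powersetCard s (univ : Finset α)) (r := fun i T => T ⊆ L i) using 3 with i
    · ext T
      simp [bipartiteAbove, mem_powersetCard, and_comm]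
    · rfl
  obtain ⟨s, rfl⟩ := Nat.exists_eq_add_of_le' hs
  calc (∑ i, (#(L i) - (s + 1))) ^ (s + 1)
      ≤ Fintype.card ι ^ s * ∑ i, (#(L i) - (s + 1)) ^ (s + 1) := by
        simpa using pow_sum_le_card_mul_sum_pow (s := (univ : Finset ι))
          (fun i _ => Nat.zero_le (#(L i) - (s + 1))) s
    _ ≤ Fintype.card ι ^ s * ((s + 1) ^ (s + 1) * ∑ i, #(powersetCard (s + 1) (L i))) := by
        refine Nat.mul_le_mul_left _ ?_
        rw [mul_sum]
        refine sum_le_sum fun i _ => ?_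
        rw [card_powersetCard, mul_comm]
        exact sub_pow_le_choose_mul _ _
    _ ≤ Fintype.card ι ^ s * ((s + 1) ^ (s + 1) *
          ((Fintype.card α).choose (s + 1) * #{i | T ⊆ L i})) := by
        rw [hcount]
        gcongr
        simpa using sum_le_card_nsmul _ _ _ hmax
    _ ≤ Fintype.card ι ^ s * ((s + 1) ^ (s + 1) *
          (Fintype.card α ^ (s + 1) * #{i | T ⊆ L i})) := by
        gcongr; exact Nat.choose_le_pow _ _
    _ = _ := by simp only [Nat.add_sub_cancel]; ring

lemma le_of_pow_le_mul_rpow {x c M p q : ℝ} {s : ℕ} (hx : 0 < x) (hc : 1 ≤ c) (hs : 1 ≤ s)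
    (h : (s * c * x ^ p) ^ s ≤ x ^ q * s ^ s * M) : c * x ^ (p * s - q) ≤ M := by
  have hsplit : (x ^ p) ^ s = x ^ q * x ^ (p * s - q) := by
    rw [← Real.rpow_natCast, ← Real.rpow_mul hx.le, ← Real.rpow_add hx]
    ring_nf
  have hcancel : x ^ q * s ^ s * (c ^ s * x ^ (p * s - q)) ≤ x ^ q * s ^ s * M := by
    calc _ = (s * c * x ^ p) ^ s := by rw [mul_pow, mul_pow, hsplit]; ring
      _ ≤ _ := h
  have hpos : 0 < x ^ q * s ^ s := by
    have : (0 : ℝ) < s := by exact_mod_cast hs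
    positivity
  calc c * x ^ (p * s - q) ≤ c ^ s * x ^ (p * s - q) := by
        gcongr; exact le_self_pow₀ hc (by omega)
    _ ≤ M := le_of_mul_le_mul_left hcancel hpos

lemma one_div_prod_le_one {t : Finset ℕ} {s : ℕ → ℕ} (hs : ∀ i ∈ t, 1 ≤ s i) :
    1 / ∏ i ∈ t, (s i : ℝ) ≤ 1 := by
  have h : (1 : ℝ) ≤ ∏ i ∈ t, (s i : ℝ) := one_le_prod fun i hi => by exact_mod_cast hs i hi
  exact (div_le_one (zero_lt_one.trans_le h)).2 h

section Box

variable {α : Type*} [Fintype α] [DecidableEq α] {k : ℕ}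

def link (E : Finset (Fin (k + 1) → α)) (e : Fin k → α) : Finset α :=
  {x | Fin.cons x e ∈ E}

lemma sum_card_link (E : Finset (Fin (k + 1) → α)) : ∑ e, #(link E e) = #E := by
  rw [card_eq_sum_card_fiberwise (f := Fin.tail) (t := univ) fun _ _ => mem_coe.2 (mem_univ _)]
  refine sum_congr rfl fun e _ => ?_
  rw [← card_image_of_injective (link E e) (Fin.cons_left_injective (α := fun _ => α) e)]
  congr 1
  ext f
  simp only [link, mem_image, mem_filter, mem_univ, true_and]
  constructor
  · rintro ⟨x, hx, rfl⟩
    exact ⟨hx, Fin.tail_cons _ _⟩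
  · rintro ⟨hf, rfl⟩
    exact ⟨f 0, by rwa [Fin.cons_self_tail], Fin.cons_self_tail f⟩

lemma card_le_sum_card_link_sub_add (E : Finset (Fin (k + 1) → α)) (s₀ : ℕ) :
    #E ≤ ∑ e, (#(link E e) - s₀) + s₀ * Fintype.card α ^ k := by
  rw [← sum_card_link E]
  calc ∑ e, #(link E e) ≤ ∑ e, ((#(link E e) - s₀) + s₀) := sum_le_sum fun _ _ => le_tsub_add
    _ = _ := by simp [sum_add_distrib, mul_comm]

lemma two_mul_le_and_le_sum_card_link_sub {n s₀ : ℕ} {C δ : ℝ} (hn : 1 ≤ n) (hC : 1 ≤ C)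
    (hδ : δ ≤ 1) (E : Finset (Fin (k + 2) → Fin n))
    (hE : 2 * s₀ * C * (n : ℝ) ^ ((k + 2 : ℝ) - δ) ≤ #E) :
    2 * s₀ ≤ n ∧ s₀ * C * (n : ℝ) ^ ((k + 2 : ℝ) - δ) ≤ ∑ e, ((#(link E e) - s₀ : ℕ) : ℝ) := by
  have hpow : (n : ℝ) ^ (k + 1) ≤ (n : ℝ) ^ ((k + 2 : ℝ) - δ) := by
    rw [← Real.rpow_natCast]
    exact Real.rpow_le_rpow_of_exponent_le (by exact_mod_cast hn) (by push_cast; linarith)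
  have hE' : 2 * s₀ * (n : ℝ) ^ (k + 1) ≤ #E :=
    calc 2 * s₀ * (n : ℝ) ^ (k + 1) ≤ 2 * s₀ * 1 * (n : ℝ) ^ ((k + 2 : ℝ) - δ) := by
          rw [mul_one]; gcongr
      _ ≤ 2 * s₀ * C * (n : ℝ) ^ ((k + 2 : ℝ) - δ) := by gcongr
      _ ≤ #E := hE
  have hEle : (#E : ℝ) ≤ n * (n : ℝ) ^ (k + 1) := by
    have := card_le_univ E
    simp only [Fintype.card_fun, Fintype.card_fin] at this
    exact_mod_cast this.trans_eq (by ring)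
  have hsum : (#E : ℝ) ≤ ∑ e, ((#(link E e) - s₀ : ℕ) : ℝ) + s₀ * (n : ℝ) ^ (k + 1) := by
    have := card_le_sum_card_link_sub_add E s₀
    simp only [Fintype.card_fin] at this
    exact_mod_cast this
  refine ⟨?_, by linarith⟩
  have : (2 * s₀ : ℝ) ≤ n := le_of_mul_le_mul_right (hE'.trans hEle) (by positivity)
  exact_mod_cast this

lemma exists_card_eq_le_card_subset_link {n s₀ : ℕ} {C δ : ℝ} (hn : 1 ≤ n) (hs₀ : 1 ≤ s₀)
    (hC : 1 ≤ C) (hδ : δ ≤ 1) (E : Finset (Fin (k + 2) → Fin n))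
    (hE : 2 * s₀ * C * (n : ℝ) ^ ((k + 2 : ℝ) - δ) ≤ #E) :
    ∃ T : Finset (Fin n), #T = s₀ ∧
      C * (n : ℝ) ^ ((k + 1 : ℝ) - s₀ * δ) ≤ #{e | T ⊆ link E e} := by
  obtain ⟨hs₀n, hlow⟩ := two_mul_le_and_le_sum_card_link_sub hn hC hδ E hE
  obtain ⟨T, hT, hcount⟩ :=
    exists_card_eq_pow_sum_sub_le (link E) hs₀ (by simp only [Fintype.card_fin]; omega)
  refine ⟨T, hT, ?_⟩
  have hcount' : (∑ e, ((#(link E e) - s₀ : ℕ) : ℝ)) ^ s₀ ≤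
      (n : ℝ) ^ (((k + 1) * (s₀ - 1) + s₀ : ℕ) : ℝ) * s₀ ^ s₀ * #{e | T ⊆ link E e} := by
    rw [Real.rpow_natCast]
    simp only [Fintype.card_fun, Fintype.card_fin] at hcount
    calc _ ≤ (((n ^ (k + 1)) ^ (s₀ - 1) * s₀ ^ s₀ * n ^ s₀ * #{e | T ⊆ link E e} : ℕ) : ℝ) := by
          exact_mod_cast hcount
      _ = _ := by push_cast; ring
  have := le_of_pow_le_mul_rpow (by positivity) hC hs₀
    ((pow_le_pow_left₀ (by positivity) hlow s₀).trans hcount')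
  convert this using 3
  push_cast [Nat.cast_sub hs₀]
  ring

/-- `C` is a constant for Erdős's box theorem with parts of sizes `s 0, …, s k`. -/
def BoxConstant (k : ℕ) (s : ℕ → ℕ) (C : ℝ) : Prop :=
  ∀ n : ℕ, 1 ≤ n → ∀ E : Finset (Fin (k + 1) → Fin n),
    C * (n : ℝ) ^ ((k + 1 : ℝ) - 1 / ∏ i ∈ range k, (s i : ℝ)) ≤ #E →
    ∃ A : Fin (k + 1) → Finset (Fin n), (∀ t, #(A t) = s t) ∧ Fintype.piFinset A ⊆ E

lemma boxConstant_zero (s : ℕ → ℕ) : BoxConstant 0 s (s 0) := by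
  intro n hn E hE
  simp only [CharP.cast_eq_zero, zero_add, range_zero, prod_empty, div_one, sub_self,
    Real.rpow_zero, mul_one, Nat.cast_le] at hE
  have hinj : Injective fun f : Fin 1 → Fin n => f 0 :=
    fun f g h => funext fun t => by rwa [Subsingleton.elim t 0]
  obtain ⟨T, hT, hTcard⟩ := exists_subset_card_eq (hE.trans (card_image_of_injective E hinj).ge)
  refine ⟨fun _ => T, fun t => by fin_cases t; simpa using hTcard, fun f hf => ?_⟩
  obtain ⟨e, he, he0⟩ := mem_image.1 (hT (Fintype.mem_piFinset.1 hf 0))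
  rwa [← hinj he0]

lemma BoxConstant.succ {k : ℕ} {s : ℕ → ℕ} {C : ℝ} (h : BoxConstant k (fun i => s (i + 1)) C)
    (hC : 1 ≤ C) (hs : ∀ i ≤ k + 1, 1 ≤ s i) : BoxConstant (k + 1) s (2 * s 0 * C) := by
  intro n hn E hE
  have hprod : ∏ i ∈ range (k + 1), (s i : ℝ) = s 0 * ∏ i ∈ range k, (s (i + 1) : ℝ) := by
    rw [prod_range_succ', mul_comm]
  have hδ : 1 / ∏ i ∈ range (k + 1), (s i : ℝ) ≤ 1 :=
    one_div_prod_le_one fun i hi => hs i (by simp at hi; omega)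
  have hs₀ : (s 0 : ℝ) ≠ 0 := by exact_mod_cast Nat.one_le_iff_ne_zero.1 (hs 0 (by omega))
  obtain ⟨T, hT, hTE⟩ := exists_card_eq_le_card_subset_link hn (hs 0 (by omega)) hC hδ E
    (by convert hE using 3; push_cast; ring)
  obtain ⟨A, hA, hAE⟩ := h n hn _ (by convert hTE using 3; rw [hprod]; field_simp)
  refine ⟨Fin.cons T A, fun t => Fin.cases (by simpa using hT) (fun i => by simpa using hA i) t,
    fun f hf => ?_⟩
  rw [Fin.mem_piFinset_iff_zero_tail] at hf
  simp only [Fin.cons_zero, Fin.tail_cons] at hf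
  have hf0 : f 0 ∈ link E (Fin.tail f) := (mem_filter.1 (hAE hf.2)).2 hf.1
  simpa [link] using hf0

lemma exists_boxConstant (k : ℕ) (s : ℕ → ℕ) (hs : ∀ i ≤ k, 1 ≤ s i) :
    ∃ C, 1 ≤ C ∧ BoxConstant k s C := by
  induction k generalizing s with
  | zero => exact ⟨s 0, by exact_mod_cast hs 0 le_rfl, boxConstant_zero s⟩
  | succ k ih =>
    obtain ⟨C, hC, h⟩ := ih (fun i => s (i + 1)) fun i hi => hs (i + 1) (by omega)
    have hs₀ : (1 : ℝ) ≤ s 0 := by exact_mod_cast hs 0 (by omega)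
    exact ⟨2 * s 0 * C, by nlinarith, h.succ hC hs⟩

end Box

lemma card_filter_apply_eq_apply_le {n k : ℕ} {t t' : Fin k} (h : t ≠ t') :
    #{b : Fin k → Fin n | b t = b t'} ≤ n ^ (k - 1) := by
  calc _ ≤ #(univ : Finset ({j // j ≠ t'} → Fin n)) :=
        card_le_card_of_injOn (fun b j => b j) (fun _ _ => mem_coe.2 (mem_univ _)) ?_
    _ = n ^ (k - 1) := by simp [Fintype.card_subtype_compl]
  intro b hb b' hb' hbb'
  funext j
  by_cases hj : j = t'
  · subst hj
    simp only [coe_filter, mem_univ, true_and, Set.mem_ofPred_eq] at hb hb'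
    rw [← hb, ← hb']
    exact congrFun hbb' ⟨t, h⟩
  · exact congrFun hbb' ⟨j, hj⟩

lemma card_le_card_filter_injective_add {n k : ℕ} (S : Finset (Fin k → Fin n)) :
    #S ≤ #(S.filter Injective) + k ^ 2 * n ^ (k - 1) := by
  rw [← card_filter_add_card_filter_not (s := S) (p := Injective)]
  gcongr
  calc #(S.filter fun b => ¬ Injective b)
      ≤ #(univ.offDiag.biUnion fun p : Fin k × Fin k => {b : Fin k → Fin n | b p.1 = b p.2}) := by
        refine card_le_card fun b hb => ?_
        simp only [Injective, mem_filter, not_forall] at hb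
        obtain ⟨-, t, t', h, hne⟩ := hb
        exact mem_biUnion.2 ⟨(t, t'), by simpa using hne, by simpa using h⟩
    _ ≤ #(univ : Finset (Fin k)).offDiag * n ^ (k - 1) := by
        rw [← smul_eq_mul]
        exact card_biUnion_le.trans (sum_le_card_nsmul _ _ _ fun p hp =>
          card_filter_apply_eq_apply_le (mem_offDiag.1 hp).2.2)
    _ ≤ k ^ 2 * n ^ (k - 1) := by
        gcongr
        simp [offDiag_card, sq]

lemma update_mem_piFinset {ι α : Type*} [Fintype ι] [DecidableEq ι] {A : ι → Finset α}
    {b : ι → α} (hb : b ∈ Fintype.piFinset A) {i : ι} {x : α} (hx : x ∈ A i) :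
    update b i x ∈ Fintype.piFinset A := by
  refine Fintype.mem_piFinset.2 fun t => ?_
  by_cases ht : t = i
  · subst ht; simpa
  · simpa [ht] using Fintype.mem_piFinset.1 hb t

lemma pairwise_disjoint_of_forall_mem_piFinset_injective {ι α : Type*} [Fintype ι] [DecidableEq ι]
    {A : ι → Finset α} (hA : ∀ i, (A i).Nonempty)
    (hinj : ∀ b ∈ Fintype.piFinset A, Injective b) : Pairwise (Disjoint on A) := by
  intro i j hij
  obtain ⟨p, hp⟩ := Fintype.piFinset_nonempty.2 hA
  refine Finset.disjoint_left.2 fun x hxi hxj => hij ?_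
  exact hinj _ (update_mem_piFinset (update_mem_piFinset hp hxi) hxj) (by simp [update_of_ne hij])

section Dense

variable {n : ℕ} {G : SimpleGraph (Fin n → Bool)}

lemma exists_le_card_linkTuples (hG : G ≤ Q n) {k : ℕ} (hk : 1 ≤ k) {c δ : ℝ} (hc : 0 ≤ c)
    (he : c * 2 ^ n * (n : ℝ) ^ (1 - δ / k) ≤ G.edgeSet.ncard) :
    ∃ z, c ^ k * (n : ℝ) ^ (k - δ) ≤ #(linkTuples G k z) := by
  obtain ⟨z, hz⟩ := exists_ncard_edgeSet_pow_le hG hk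
  refine ⟨z, ?_⟩
  have hpow : ((n : ℝ) ^ (1 - δ / k)) ^ k = (n : ℝ) ^ (k - δ) := by
    have : (k : ℝ) ≠ 0 := by positivity
    rw [← Real.rpow_natCast, ← Real.rpow_mul (Nat.cast_nonneg n)]
    congr 1
    field_simp
  refine le_of_mul_le_mul_left ?_ (by positivity : (0 : ℝ) < (2 ^ n) ^ k)
  calc (2 ^ n) ^ k * (c ^ k * (n : ℝ) ^ (k - δ)) = (c * 2 ^ n * (n : ℝ) ^ (1 - δ / k)) ^ k := by
        rw [mul_pow, mul_pow, hpow]; ring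
    _ ≤ (G.edgeSet.ncard : ℝ) ^ k := pow_le_pow_left₀ (by positivity) he k
    _ ≤ (2 ^ n) ^ k * #(linkTuples G k z) := by exact_mod_cast hz

lemma exists_le_card_filter_injective_linkTuples (hG : G ≤ Q n) (hn : 1 ≤ n) {k : ℕ} (hk : 1 ≤ k)
    {c δ : ℝ} (hc : 1 ≤ c) (hδ : δ ≤ 1)
    (he : (c + k ^ 2) * 2 ^ n * (n : ℝ) ^ (1 - δ / k) ≤ G.edgeSet.ncard) :
    ∃ z, c * (n : ℝ) ^ (k - δ) ≤ #((linkTuples G k z).filter Injective) := by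
  obtain ⟨z, hz⟩ := exists_le_card_linkTuples hG hk (by positivity) he
  refine ⟨z, ?_⟩
  have hsplit : (#(linkTuples G k z) : ℝ) ≤
      #((linkTuples G k z).filter Injective) + k ^ 2 * (n : ℝ) ^ (k - 1) := by
    exact_mod_cast card_le_card_filter_injective_add (linkTuples G k z)
  have hnk : (n : ℝ) ^ (k - 1) ≤ (n : ℝ) ^ ((k : ℝ) - δ) := by
    rw [← Real.rpow_natCast, Nat.cast_sub hk]
    exact Real.rpow_le_rpow_of_exponent_le (by exact_mod_cast hn) (by push_cast; linarith)
  have hck : c + k ^ 2 ≤ (c + k ^ 2) ^ k := le_self_pow₀ (by nlinarith) (by omega)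
  nlinarith [Real.rpow_nonneg (Nat.cast_nonneg n) ((k : ℝ) - δ)]

theorem exists_box_subset_linkTuples {k : ℕ} (hk : 1 ≤ k) (s : ℕ → ℕ) (hs : ∀ i < k, 1 ≤ s i) :
    ∃ C : ℝ, 0 < C ∧ ∀ n, 1 ≤ n → ∀ G : SimpleGraph (Fin n → Bool), G ≤ Q n →
      C * 2 ^ n * (n : ℝ) ^ ((1 : ℝ) - (1 / ∏ i ∈ range (k - 1), (s i : ℝ)) / k) ≤
        G.edgeSet.ncard →
      ∃ z A, (∀ t : Fin k, #(A t) = s t) ∧ Pairwise (Disjoint on A) ∧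
        (∀ t, ∀ x ∈ A t, z x = false) ∧ Fintype.piFinset A ⊆ linkTuples G k z := by
  obtain ⟨m, rfl⟩ := Nat.exists_eq_add_of_le' hk
  obtain ⟨C, hC, hbox⟩ := exists_boxConstant m s fun i hi => hs i (by omega)
  refine ⟨C + ((m + 1 : ℕ) : ℝ) ^ 2, by positivity, fun n hn G hG he => ?_⟩
  obtain ⟨z, hz⟩ := exists_le_card_filter_injective_linkTuples hG hn hk hC
    (one_div_prod_le_one fun i hi => hs i (by simp at hi; omega)) he
  obtain ⟨A, hA, hAE⟩ := hbox n hn _ (by simpa using hz)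
  have hAne : ∀ t, (A t).Nonempty := fun t => card_pos.1 (by rw [hA t]; exact hs t t.2)
  have hAG : Fintype.piFinset A ⊆ linkTuples G (m + 1) z := fun b hb => (mem_filter.1 (hAE hb)).1
  obtain ⟨p, hp⟩ := Fintype.piFinset_nonempty.2 hAne
  refine ⟨z, A, hA, pairwise_disjoint_of_forall_mem_piFinset_injective hAne
    fun b hb => (mem_filter.1 (hAE hb)).2, fun t x hx => ?_, hAG⟩
  simpa using (mem_linkTuples.1 (hAG (update_mem_piFinset hp hx))).1 t

end Dense

lemma exists_injective_forall_mem {α β ι : Type*} [Fintype α] [DecidableEq ι]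
    (σ : α → ι) (A : ι → Finset β) (hA : Pairwise (Disjoint on A))
    (hcard : ∀ i, #{x | σ x = i} ≤ #(A i)) :
    ∃ a : α → β, Injective a ∧ ∀ x, a x ∈ A (σ x) := by
  have hemb : ∀ i, Nonempty ({x // σ x = i} ↪ A i) := fun i =>
    Function.Embedding.nonempty_of_card_le (by simpa [Fintype.card_subtype] using hcard i)
  let g := fun i => (hemb i).some
  refine ⟨fun x => g (σ x) ⟨x, rfl⟩, fun x y hxy => ?_, fun x => (g (σ x) ⟨x, rfl⟩).2⟩
  have hxy' : (g (σ x) ⟨x, rfl⟩ : β) = g (σ y) ⟨y, rfl⟩ := hxy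
  have hσ : σ x = σ y := by
    by_contra hne
    exact Finset.disjoint_left.1 (hA hne) (g (σ x) ⟨x, rfl⟩).2 (hxy' ▸ (g (σ y) ⟨y, rfl⟩).2)
  -- `σ x = σ y` cannot be substituted, so the fibre indices are generalized first
  have hfiber : ∀ i j (hx : σ x = i) (hy : σ y = j), i = j →
      (g i ⟨x, hx⟩ : β) = g j ⟨y, hy⟩ → x = y := by
    rintro i _ hx hy rfl h
    exact congrArg Subtype.val ((g i).injective (Subtype.ext h))
  exact hfiber _ _ rfl rfl hσ hxy'

section Embedding

variable {n l k : ℕ} {z : Fin n → Bool} {a : Fin l → Fin n}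

def subcubeMap (z : Fin n → Bool) (a : Fin l → Fin n) (u : Fin l → Bool) : Fin n → Bool :=
  switchOn z ((supp u).image a)

lemma subcubeMap_apply (ha : Injective a) (hz : ∀ j, z (a j) = false) (u : Fin l → Bool)
    (j : Fin l) : subcubeMap z a u (a j) = u j := by
  by_cases hj : u j = true <;> simp [subcubeMap, switchOn, supp, ha.eq_iff, hj, hz]

lemma subcubeMap_injective (ha : Injective a) (hz : ∀ j, z (a j) = false) :
    Injective (subcubeMap z a) := fun u v h => funext fun j => by
  rw [← subcubeMap_apply ha hz u j, h, subcubeMap_apply ha hz]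

lemma update_subcubeMap (ha : Injective a) (hz : ∀ j, z (a j) = false) (v : Fin l → Bool)
    (j : Fin l) : update (subcubeMap z a v) (a j) false = subcubeMap z a (update v j false) := by
  rw [subcubeMap, subcubeMap, update_switchOn (hz j), supp_update_false, image_erase ha]

variable {G : SimpleGraph (Fin n → Bool)} {σ : Fin l → Fin k} {A : Fin k → Finset (Fin n)}

lemma adj_subcubeMap_update (ha : Injective a) (hz : ∀ j, z (a j) = false)
    (haA : ∀ j, a j ∈ A (σ j)) (hAG : Fintype.piFinset A ⊆ linkTuples G k z)
    {v : Fin l → Bool} {i : Fin l} (hv : v i = true) (hcard : #(supp v) = k)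
    (hσ : Set.InjOn σ (supp v)) :
    G.Adj (subcubeMap z a (update v i false)) (subcubeMap z a v) := by
  have hsurj : ∀ t, ∃ j ∈ supp v, σ j = t := fun t =>
    mem_image.1 (image_eq_univ_of_injOn hσ hcard ▸ mem_univ t)
  choose τ hτv hστ using hsurj
  have hτσ : ∀ j ∈ supp v, τ (σ j) = j := fun j hj => hσ (hτv _) hj (hστ _)
  have hb : (fun t => a (τ t)) ∈ linkTuples G k z :=
    hAG (Fintype.mem_piFinset.2 fun t => by simpa only [hστ t] using haA (τ t))
  have himage_b : univ.image (fun t => a (τ t)) = (supp v).image a := by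
    ext x
    simp only [mem_image, mem_univ, true_and]
    constructor
    · rintro ⟨t, rfl⟩
      exact ⟨τ t, hτv t, rfl⟩
    · rintro ⟨j, hj, rfl⟩
      exact ⟨σ j, by rw [hτσ j hj]⟩
  have hi := (mem_downSet.1 ((mem_linkTuples.1 hb).2 (σ i))).2
  rwa [himage_b, hτσ i (by simpa [supp] using hv), ← subcubeMap,
    update_subcubeMap ha hz] at hi

lemma adj_subcubeMap {H : SimpleGraph (Fin l → Bool)} (hH : H ≤ Q l)
    (hrep : ∀ u v, H.Adj u v → (supp u ∪ supp v).card = k ∧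
        Set.InjOn σ ((supp u ∪ supp v : Finset (Fin l)) : Set (Fin l)))
    (ha : Injective a) (hz : ∀ j, z (a j) = false)
    (haA : ∀ j, a j ∈ A (σ j)) (hAG : Fintype.piFinset A ⊆ linkTuples G k z)
    {u v : Fin l → Bool} (huv : H.Adj u v) : G.Adj (subcubeMap z a u) (subcubeMap z a v) := by
  have hdown : ∀ {u v}, H.Adj u v → ∀ i, v i = true → u = update v i false →
      G.Adj (subcubeMap z a u) (subcubeMap z a v) := by
    rintro u v huv i hv rfl
    obtain ⟨hcard, hσ⟩ := hrep _ _ huv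
    rw [supp_update_false, union_eq_right.2 (erase_subset _ _)] at hcard hσ
    exact adj_subcubeMap_update ha hz haA hAG hv hcard hσ
  obtain ⟨i, ⟨hv, hu⟩ | ⟨hu, hv⟩⟩ := Q.exists_eq_update_of_adj (hH huv)
  · exact hdown huv i hv hu
  · exact (hdown huv.symm i hu hv).symm

theorem exists_embedding_of_piFinset_subset_linkTuples {H : SimpleGraph (Fin l → Bool)}
    (hH : H ≤ Q l)
    (hrep : ∀ u v, H.Adj u v → (supp u ∪ supp v).card = k ∧
        Set.InjOn σ ((supp u ∪ supp v : Finset (Fin l)) : Set (Fin l)))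
    (hcard : ∀ t, #{j | σ j = t} ≤ #(A t)) (hdisj : Pairwise (Disjoint on A))
    (hz : ∀ t, ∀ x ∈ A t, z x = false) (hAG : Fintype.piFinset A ⊆ linkTuples G k z) :
    ∃ f : (Fin l → Bool) → (Fin n → Bool), Injective f ∧ ∀ u v, H.Adj u v → G.Adj (f u) (f v) := by
  obtain ⟨a, ha, haA⟩ := exists_injective_forall_mem σ A hdisj hcard
  have hza : ∀ j, z (a j) = false := fun j => hz _ _ (haA j)
  exact ⟨subcubeMap z a, subcubeMap_injective ha hza,
    fun u v huv => adj_subcubeMap hH hrep ha hza haA hAG huv⟩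

end Embedding

theorem cube_turan_kpartite_sizes_general
    (k l : ℕ)
    (H : SimpleGraph (Fin l → Bool)) (hH : H ≤ Q l)
    (σ : Fin l → Fin k)
    (hrep : ∀ u v, H.Adj u v → (supp u ∪ supp v).card = k ∧
        Set.InjOn σ ((supp u ∪ supp v : Finset (Fin l)) : Set (Fin l)))
    (s : ℕ → ℕ)
    (hsizes : ∀ i : Fin k, (Finset.univ.filter fun x => σ x = i).card = s (i : ℕ)) :
    ∃ C : ℝ, 0 < C ∧ ∃ N : ℕ, ∀ n ≥ N, ∀ G : SimpleGraph (Fin n → Bool), G ≤ Q n →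
      C * 2 ^ n * (n : ℝ) ^
          ((1 : ℝ) - (1 / ∏ i ∈ Finset.range (k - 1), (s i : ℝ)) / k)
        ≤ (G.edgeSet.ncard : ℝ) →
      ∃ f : (Fin l → Bool) → (Fin n → Bool), Function.Injective f ∧
        ∀ u v, H.Adj u v → G.Adj (f u) (f v) := by
  by_cases hedge : ∃ u v, H.Adj u v
  · obtain ⟨u₀, v₀, huv₀⟩ := hedge
    obtain ⟨hcard₀, hσ₀⟩ := hrep u₀ v₀ huv₀
    have hk : 1 ≤ k := hcard₀ ▸ card_pos.2 (nonempty_supp_union_of_ne (H.ne_of_adj huv₀))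
    have hs : ∀ i < k, 1 ≤ s i := fun i hi => by
      obtain ⟨j, -, hj⟩ := mem_image.1 (image_eq_univ_of_injOn hσ₀ hcard₀ ▸ mem_univ (⟨i, hi⟩ : Fin k))
      exact hsizes ⟨i, hi⟩ ▸ card_pos.2 ⟨j, by simp [hj]⟩
    obtain ⟨C, hC, hdense⟩ := exists_box_subset_linkTuples hk s hs
    refine ⟨C, hC, 1, fun n hn G hG he => ?_⟩
    obtain ⟨z, A, hA, hdisj, hz, hAG⟩ := hdense n hn G hG he
    exact exists_embedding_of_piFinset_subset_linkTuples hH hrep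
      (fun t => (hsizes t).trans_le (hA t).ge) hdisj hz hAG
  · simp only [not_exists] at hedge
    exact ⟨1, one_pos, l, fun n hn _ _ _ => ⟨subcubeMap (fun _ => false) (Fin.castLE hn),
      subcubeMap_injective (Fin.castLE_injective hn) fun _ => rfl,
      fun u v huv => (hedge u v huv).elim⟩⟩

/-- corollary of the main theorem and the Erdős box theorem:
if `H ≤ Q l` admits a k-partite representation with colouring `σ : [l] → [k]` whose
partite sets `σ⁻¹(i)` have sizes `s 0 ≤ s 1 ≤ ⋯ ≤ s (k-1)`, then with
`δ = 1/(s 0 ⋯ s (k-2))` we have `ex(Q_n, H) = O(2^n n^{1 - δ/k})`: there is `C > 0`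
such that for `n` large, every subgraph `G ≤ Q n` with at least `C 2^n n^{1-δ/k}` edges
contains a copy of `H`. -/
theorem cube_turan_kpartite_sizes
    (k l : ℕ) (hk : 1 ≤ k)
    (H : SimpleGraph (Fin l → Bool)) (hH : H ≤ Q l)
    (σ : Fin l → Fin k)
    (hrep : ∀ u v, H.Adj u v → (supp u ∪ supp v).card = k ∧
        Set.InjOn σ ((supp u ∪ supp v : Finset (Fin l)) : Set (Fin l)))
    (s : ℕ → ℕ)
    (hsizes : ∀ i : Fin k, (Finset.univ.filter fun x => σ x = i).card = s (i : ℕ))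
    (hmono : ∀ i j, i ≤ j → j < k → s i ≤ s j) :
    ∃ C : ℝ, 0 < C ∧ ∃ N : ℕ, ∀ n ≥ N, ∀ G : SimpleGraph (Fin n → Bool), G ≤ Q n →
      C * 2 ^ n * (n : ℝ) ^
          ((1 : ℝ) - (1 / ∏ i ∈ Finset.range (k - 1), (s i : ℝ)) / k)
        ≤ (G.edgeSet.ncard : ℝ) →
      ∃ f : (Fin l → Bool) → (Fin n → Bool), Function.Injective f ∧
        ∀ u v, H.Adj u v → G.Adj (f u) (f v) :=
  cube_turan_kpartite_sizes_general k l H hH σ hrep s hsizes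
end
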